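/- The transformations T_{(G,F)} generate an equivalence relation directly: the relation on pairs (v,w) of even power series in R[[t]] with zero constant coefficient defined by (v,w) ∼ (v',w') iff (v',w') = T_{(G,F)}(v,w) for some pair (G,F) with G odd and F ∈ H odd, is reflexive (via (G,F) = (0,t)), symmetric, and transitive. In particular each T_{(G,F)} maps pairs of even power series with zero constant coefficient to pairs of even power series with zero constant coefficient. -/

import Mathlib

open PowerSeries

variable {R : Type*} [CommRing R]

/-- Substitution of the power series `G` (with zero constant coefficient) into `F`. -/
noncomputable def PowerSeries.comp (F G : R⟦X⟧) : R⟦X⟧ :=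
  PowerSeries.mk fun n => ∑ k ∈ Finset.range (n + 1), coeff k F * coeff n (G ^ k)

/-- A power series is even if all its odd-degree coefficients vanish. -/
def PowerSeries.IsEven (F : R⟦X⟧) : Prop := ∀ n : ℕ, Odd n → coeff n F = 0

/-- A power series is odd if all its even-degree coefficients vanish. -/
def PowerSeries.IsOdd (F : R⟦X⟧) : Prop := ∀ n : ℕ, Even n → coeff n F = 0

/-- Membership in the group `H`: zero constant coefficient and unit coefficient of `t`. -/
def PowerSeries.InH (F : R⟦X⟧) : Prop :=
  constantCoeff F = 0 ∧ IsUnit (coeff 1 F)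

/-- For `v = ∑_{i≥1} v_i t^{2i}`, this is `v⟨F⟩ := ∑_{i≥1} v_i F^{2i-1}`. -/
noncomputable def PowerSeries.substOddPow (v F : R⟦X⟧) : R⟦X⟧ :=
  PowerSeries.mk fun n =>
    ∑ i ∈ Finset.range (n + 1), coeff (2 * (i + 1)) v * coeff n (F ^ (2 * (i + 1) - 1))

/-- The action `T_{(G,F)}` of a unital `A_∞`-isomorphism on the pair `(v,w)` of
characteristic power series of an odd Moore algebra. -/
noncomputable def MooreAct (G F : R⟦X⟧) (p : R⟦X⟧ × R⟦X⟧) : R⟦X⟧ × R⟦X⟧ :=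
  (2 * PowerSeries.X * G + PowerSeries.X * PowerSeries.substOddPow p.1 F,
    -(G * PowerSeries.substOddPow p.1 F) + PowerSeries.comp p.2 F - G ^ 2)

/-- `p` is a pair of even power series with zero constant coefficient. -/
def GoodPair (p : R⟦X⟧ × R⟦X⟧) : Prop :=
  p.1.IsEven ∧ constantCoeff p.1 = 0 ∧ p.2.IsEven ∧ constantCoeff p.2 = 0

/-- The relation `(v,w) ∼ (v',w')` iff `(v',w') = T_{(G,F)}(v,w)` for some `G` odd and
`F ∈ H` odd. -/
def MooreRel (p q : R⟦X⟧ × R⟦X⟧) : Prop :=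
  ∃ G F : R⟦X⟧, G.IsOdd ∧ F.IsOdd ∧ F.InH ∧ q = MooreAct G F p

/-!
An even `v` with `v(0) = 0` is `t * u` with `u` odd, and then `v⟨F⟩ = u ∘ F`. Hence
`T_{(G,F)}(t u, w) = (t (2G + u ∘ F), -G (u ∘ F) + w ∘ F - G²)`, and since substitution of a
series without constant term is an associative ring homomorphism, the composition law
`T_{(G₂,F₂)} ∘ T_{(G₁,F₁)} = T_{(G₂ + G₁ ∘ F₂, F₁ ∘ F₂)}` becomes a ring identity. This gives
transitivity, and symmetry with `(-(G ∘ F'), F')` for the compositional inverse `F'` of `F`.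
Parities are tracked through the `ℤ/2`-grading of `R⟦t⟧`, which substitution of an odd series
preserves. The compositional inverse of an odd `F` is odd because its `n`-th coefficient is
computed from the `n`-th coefficient of `F` composed with the truncation below degree `n`,
which is odd by induction.
-/

open Finset

namespace PowerSeries

variable (R) in
def paritySubmodule (k : ZMod 2) : Submodule R R⟦X⟧ where
  carrier := {F | ∀ n : ℕ, (n : ZMod 2) ≠ k → coeff n F = 0}
  add_mem' hF hG n hn := by rw [map_add, hF n hn, hG n hn, add_zero]
  zero_mem' n _ := map_zero _
  smul_mem' c F hF n hn := by rw [coeff_smul, hF n hn, smul_zero]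

lemma mem_paritySubmodule {k : ZMod 2} {F : R⟦X⟧} :
    F ∈ paritySubmodule R k ↔ ∀ n : ℕ, (n : ZMod 2) ≠ k → coeff n F = 0 :=
  Iff.rfl

instance : SetLike.GradedMonoid (paritySubmodule R) where
  one_mem n hn := by
    rw [coeff_one, if_neg]
    rintro rfl
    exact hn Nat.cast_zero
  mul_mem i j F G hF hG n hn := by
    rw [coeff_mul]
    refine sum_eq_zero fun ⟨a, b⟩ hab => ?_
    rw [HasAntidiagonal.mem_antidiagonal] at hab
    by_cases ha : (a : ZMod 2) = i
    · have hb : (b : ZMod 2) ≠ j := fun hb => hn (by rw [← hab, Nat.cast_add, ha, hb])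
      rw [hG b hb, mul_zero]
    · rw [hF a ha, zero_mul]

lemma isEven_iff_mem_paritySubmodule {F : R⟦X⟧} : F.IsEven ↔ F ∈ paritySubmodule R 0 := by
  simp only [IsEven, mem_paritySubmodule, Ne, ZMod.natCast_eq_zero_iff_even, Nat.not_even_iff_odd]

lemma isOdd_iff_mem_paritySubmodule {F : R⟦X⟧} : F.IsOdd ↔ F ∈ paritySubmodule R 1 := by
  simp only [IsOdd, mem_paritySubmodule, Ne, ZMod.natCast_eq_one_iff_odd, Nat.not_odd_iff_even]

lemma IsEven.add {F G : R⟦X⟧} (hF : F.IsEven) (hG : G.IsEven) : (F + G).IsEven := by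
  rw [isEven_iff_mem_paritySubmodule] at *
  exact add_mem hF hG

lemma IsEven.neg {F : R⟦X⟧} (hF : F.IsEven) : (-F).IsEven := by
  rw [isEven_iff_mem_paritySubmodule] at *
  exact neg_mem hF

lemma IsEven.sub {F G : R⟦X⟧} (hF : F.IsEven) (hG : G.IsEven) : (F - G).IsEven := by
  rw [isEven_iff_mem_paritySubmodule] at *
  exact sub_mem hF hG

lemma IsOdd.add {F G : R⟦X⟧} (hF : F.IsOdd) (hG : G.IsOdd) : (F + G).IsOdd := by
  rw [isOdd_iff_mem_paritySubmodule] at *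
  exact add_mem hF hG

lemma IsOdd.neg {F : R⟦X⟧} (hF : F.IsOdd) : (-F).IsOdd := by
  rw [isOdd_iff_mem_paritySubmodule] at *
  exact neg_mem hF

lemma IsOdd.mul {F G : R⟦X⟧} (hF : F.IsOdd) (hG : G.IsOdd) : (F * G).IsEven := by
  rw [isOdd_iff_mem_paritySubmodule] at hF hG
  rw [isEven_iff_mem_paritySubmodule]
  exact SetLike.mul_mem_graded hF hG

lemma IsOdd.two_mul {F : R⟦X⟧} (hF : F.IsOdd) : (2 * F).IsOdd :=
  _root_.two_mul F ▸ hF.add hF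

lemma isOdd_zero : (0 : R⟦X⟧).IsOdd :=
  isOdd_iff_mem_paritySubmodule.mpr (zero_mem _)

lemma isOdd_X : (X : R⟦X⟧).IsOdd := by
  intro n hn
  rw [coeff_X, if_neg]
  rintro rfl
  exact Nat.not_even_one hn

lemma IsOdd.constantCoeff_eq_zero {F : R⟦X⟧} (hF : F.IsOdd) : constantCoeff F = 0 := by
  rw [← coeff_zero_eq_constantCoeff_apply]
  exact hF 0 Even.zero

lemma coeff_comp (F G : R⟦X⟧) (n : ℕ) :
    coeff n (F.comp G) = ∑ k ∈ range (n + 1), coeff k F * coeff n (G ^ k) :=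
  coeff_mk n _

lemma comp_mem_paritySubmodule {k : ZMod 2} {F G : R⟦X⟧} (hF : F ∈ paritySubmodule R k)
    (hG : G.IsOdd) : F.comp G ∈ paritySubmodule R k := by
  rw [isOdd_iff_mem_paritySubmodule] at hG
  intro n hn
  rw [coeff_comp]
  refine sum_eq_zero fun d _ => ?_
  by_cases hd : (d : ZMod 2) = k
  · have hGd : G ^ d ∈ paritySubmodule R k := by
      simpa [hd] using SetLike.pow_mem_graded d hG
    rw [hGd n hn, mul_zero]
  · rw [hF d hd, zero_mul]

lemma IsEven.comp {F G : R⟦X⟧} (hF : F.IsEven) (hG : G.IsOdd) : (F.comp G).IsEven := by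
  rw [isEven_iff_mem_paritySubmodule] at *
  exact comp_mem_paritySubmodule hF hG

lemma IsOdd.comp {F G : R⟦X⟧} (hF : F.IsOdd) (hG : G.IsOdd) : (F.comp G).IsOdd := by
  rw [isOdd_iff_mem_paritySubmodule] at hF ⊢
  exact comp_mem_paritySubmodule hF hG

lemma coeff_pow_eq_zero_of_lt {F : R⟦X⟧} (hF : constantCoeff F = 0) {n d : ℕ} (h : n < d) :
    coeff n (F ^ d) = 0 :=
  coeff_of_lt_order n ((Nat.cast_lt.mpr h).trans_le (le_order_pow_of_constantCoeff_eq_zero d hF))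

lemma comp_eq_subst (F : R⟦X⟧) {G : R⟦X⟧} (hG : constantCoeff G = 0) : F.comp G = F.subst G := by
  ext n
  rw [coeff_comp, coeff_subst' (HasSubst.of_constantCoeff_zero' hG)]
  refine (finsum_eq_sum_of_support_subset _ fun d hd => ?_).symm
  by_contra hdn
  rw [coe_range, Set.mem_Iio, not_lt] at hdn
  exact hd (by simp only [coeff_pow_eq_zero_of_lt hG hdn, mul_zero])

lemma comp_add (F₁ F₂ G : R⟦X⟧) : (F₁ + F₂).comp G = F₁.comp G + F₂.comp G := by
  ext n
  simp only [coeff_comp, map_add, add_mul, sum_add_distrib]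

lemma comp_neg (F G : R⟦X⟧) : (-F).comp G = -F.comp G := by
  ext n
  simp only [coeff_comp, map_neg, neg_mul, sum_neg_distrib]

lemma comp_sub (F₁ F₂ G : R⟦X⟧) : (F₁ - F₂).comp G = F₁.comp G - F₂.comp G := by
  rw [sub_eq_add_neg, comp_add, comp_neg, sub_eq_add_neg]

lemma comp_mul (F₁ F₂ : R⟦X⟧) {G : R⟦X⟧} (hG : constantCoeff G = 0) :
    (F₁ * F₂).comp G = F₁.comp G * F₂.comp G := by
  simp only [comp_eq_subst _ hG, subst_mul (HasSubst.of_constantCoeff_zero' hG)]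

lemma comp_pow (F : R⟦X⟧) {G : R⟦X⟧} (hG : constantCoeff G = 0) (d : ℕ) :
    (F ^ d).comp G = F.comp G ^ d := by
  simp only [comp_eq_subst _ hG, subst_pow (HasSubst.of_constantCoeff_zero' hG)]

lemma comp_X (F : R⟦X⟧) : F.comp X = F := by
  rw [comp_eq_subst F constantCoeff_X, X_subst]

lemma constantCoeff_comp (F G : R⟦X⟧) : constantCoeff (F.comp G) = constantCoeff F := by
  rw [← coeff_zero_eq_constantCoeff_apply, ← coeff_zero_eq_constantCoeff_apply, coeff_comp]
  simp

lemma coeff_one_comp (F G : R⟦X⟧) : coeff 1 (F.comp G) = coeff 1 F * coeff 1 G := by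
  simp [coeff_comp, sum_range_succ, coeff_one]

lemma comp_comp (F : R⟦X⟧) {G₁ G₂ : R⟦X⟧} (hG₁ : constantCoeff G₁ = 0)
    (hG₂ : constantCoeff G₂ = 0) : (F.comp G₁).comp G₂ = F.comp (G₁.comp G₂) := by
  have hG₁₂ : constantCoeff (G₁.comp G₂) = 0 := by rw [constantCoeff_comp, hG₁]
  rw [comp_eq_subst _ hG₁₂, comp_eq_subst _ hG₁, comp_eq_subst _ hG₂, comp_eq_subst _ hG₂,
    subst_comp_subst_apply (HasSubst.of_constantCoeff_zero' hG₁)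
      (HasSubst.of_constantCoeff_zero' hG₂)]

lemma InH.comp {F G : R⟦X⟧} (hF : F.InH) (hG : G.InH) : (F.comp G).InH :=
  ⟨by rw [constantCoeff_comp, hF.1], by rw [coeff_one_comp]; exact hF.2.mul hG.2⟩

lemma inH_X : (X : R⟦X⟧).InH :=
  ⟨constantCoeff_X, by simp⟩

lemma isOdd_substInv {F : R⟦X⟧} [Invertible (coeff 1 F)] (hF : F.IsOdd) :
    (substInv F).IsOdd := by
  suffices h : ∀ n, Even n → substInvFun F n = 0 from fun n hn => by
    rw [substInv, coeff_mk, h n hn]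
  intro n
  induction n using Nat.strong_induction_on with
  | _ n ih =>
    intro hn
    obtain _ | _ | m := n
    · simp [substInvFun]
    · exact absurd hn Nat.not_even_one
    · set B : R⟦X⟧ := ∑ i : Fin (m + 2), C (substInvFun F i) * X ^ (i : ℕ)
      have hB : B.IsOdd := by
        rw [isOdd_iff_mem_paritySubmodule]
        refine Submodule.sum_mem _ fun i _ => ?_
        rcases Nat.even_or_odd i with hi | hi
        · rw [ih i i.2 hi, map_zero, zero_mul]
          exact zero_mem _
        · rw [← smul_eq_C_mul]
          refine Submodule.smul_mem _ _ ?_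
          simpa [ZMod.natCast_eq_one_iff_odd.mpr hi] using
            SetLike.pow_mem_graded i (isOdd_iff_mem_paritySubmodule.mp isOdd_X)
      have hFB : IsOdd (F.subst B : R⟦X⟧) := by
        rw [← comp_eq_subst _ hB.constantCoeff_eq_zero]
        exact hF.comp hB
      rw [substInvFun, hFB _ hn, mul_zero]
      exact m.succ_ne_zero

lemma exists_isOdd_inH_comp_eq_X {F : R⟦X⟧} (hFo : F.IsOdd) (hF : F.InH) :
    ∃ F' : R⟦X⟧, F'.IsOdd ∧ F'.InH ∧ F.comp F' = X := by
  let := hF.2.invertible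
  refine ⟨substInv F, isOdd_substInv hFo, ⟨constantCoeff_substInv F, ?_⟩, ?_⟩
  · rw [coeff_one_substInv]
    exact isUnit_of_invertible _
  · rw [comp_eq_subst _ (constantCoeff_substInv F), subst_substInv_right F hF.1]

lemma substOddPow_X_mul {u : R⟦X⟧} (hu : u.IsOdd) {F : R⟦X⟧} (hF : constantCoeff F = 0) :
    (X * u).substOddPow F = u.comp F := by
  ext n
  rw [substOddPow, coeff_mk, coeff_comp]
  have hterm : ∀ i, coeff (2 * (i + 1)) (X * u) * coeff n (F ^ (2 * (i + 1) - 1)) =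
      coeff (2 * i + 1) u * coeff n (F ^ (2 * i + 1)) := fun i => by
    rw [show 2 * (i + 1) = 2 * i + 1 + 1 by ring, coeff_succ_X_mul, Nat.add_sub_cancel]
  simp only [hterm]
  refine sum_bij_ne_zero (fun i _ _ => 2 * i + 1) (fun i _ hi => ?_) (fun _ _ _ _ _ _ _ => by omega)
    (fun k hk hk0 => ?_) (fun _ _ _ => rfl)
  · by_contra hin
    rw [mem_range, not_lt] at hin
    exact hi (by rw [coeff_pow_eq_zero_of_lt hF hin, mul_zero])
  · obtain ⟨i, rfl⟩ : Odd k := by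
      by_contra hk'
      exact hk0 (by rw [hu k (Nat.not_odd_iff_even.mp hk'), zero_mul])
    exact ⟨i, by rw [mem_range] at hk ⊢; omega, hk0, rfl⟩

lemma exists_isOdd_eq_X_mul {v : R⟦X⟧} (hv : v.IsEven) (hv0 : constantCoeff v = 0) :
    ∃ u : R⟦X⟧, u.IsOdd ∧ v = X * u := by
  obtain ⟨u, rfl⟩ := X_dvd_iff.mpr hv0
  refine ⟨u, fun n hn => ?_, rfl⟩
  rw [← coeff_succ_X_mul]
  exact hv (n + 1) hn.add_one

end PowerSeries

open PowerSeries

lemma mooreAct_X_mul {u : R⟦X⟧} (hu : u.IsOdd) (w G : R⟦X⟧) {F : R⟦X⟧}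
    (hF : constantCoeff F = 0) :
    MooreAct G F (X * u, w) = (X * (2 * G + u.comp F), -(G * u.comp F) + w.comp F - G ^ 2) := by
  rw [MooreAct, substOddPow_X_mul hu hF, mul_add, mul_left_comm, mul_assoc]

lemma goodPair_mooreAct {p : R⟦X⟧ × R⟦X⟧} (hp : GoodPair p) {G F : R⟦X⟧} (hG : G.IsOdd)
    (hF : F.IsOdd) : GoodPair (MooreAct G F p) := by
  obtain ⟨hv, hv0, hw, hw0⟩ := hp
  obtain ⟨u, hu, hvu⟩ := exists_isOdd_eq_X_mul hv hv0
  rw [← Prod.mk.eta (p := p), hvu, mooreAct_X_mul hu _ _ hF.constantCoeff_eq_zero]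
  refine ⟨isOdd_X.mul (hG.two_mul.add (hu.comp hF)), by simp,
    ((hG.mul (hu.comp hF)).neg.add (hw.comp hF)).sub (pow_two G ▸ hG.mul hG), ?_⟩
  simp [constantCoeff_comp, hw0, hG.constantCoeff_eq_zero]

lemma mooreAct_zero_X {p : R⟦X⟧ × R⟦X⟧} (hv : p.1.IsEven) (hv0 : constantCoeff p.1 = 0) :
    MooreAct 0 X p = p := by
  obtain ⟨u, hu, hvu⟩ := exists_isOdd_eq_X_mul hv hv0
  rw [← Prod.mk.eta (p := p), hvu, mooreAct_X_mul hu _ _ constantCoeff_X, comp_X, comp_X]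
  simp

lemma mooreAct_mooreAct {p : R⟦X⟧ × R⟦X⟧} (hv : p.1.IsEven) (hv0 : constantCoeff p.1 = 0)
    {G₁ F₁ G₂ F₂ : R⟦X⟧} (hG₁ : G₁.IsOdd) (hF₁ : F₁.IsOdd) (hF₂ : constantCoeff F₂ = 0) :
    MooreAct G₂ F₂ (MooreAct G₁ F₁ p) = MooreAct (G₂ + G₁.comp F₂) (F₁.comp F₂) p := by
  obtain ⟨u, hu, hvu⟩ := exists_isOdd_eq_X_mul hv hv0
  have hF₁0 := hF₁.constantCoeff_eq_zero
  rw [← Prod.mk.eta (p := p), hvu, mooreAct_X_mul hu _ _ hF₁0,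
    mooreAct_X_mul (hG₁.two_mul.add (hu.comp hF₁)) _ _ hF₂,
    mooreAct_X_mul hu _ _ (by rw [constantCoeff_comp, hF₁0])]
  simp only [two_mul, comp_add, comp_sub, comp_neg, comp_mul _ _ hF₂, comp_pow _ hF₂,
    comp_comp _ hF₁0 hF₂]
  ext1 <;> ring

/-- The transformations `T_{(G,F)}` generate an equivalence relation directly: `∼` is
reflexive (via `(G,F) = (0,t)`), symmetric and transitive on pairs of even power series with
zero constant coefficient, and each `T_{(G,F)}` preserves such pairs. -/
theorem mooreRel_equivalence (R : Type*) [CommRing R] :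
    (∀ p : R⟦X⟧ × R⟦X⟧, GoodPair p → ∀ G F : R⟦X⟧, G.IsOdd → F.IsOdd → F.InH →
      GoodPair (MooreAct G F p)) ∧
    (∀ p : R⟦X⟧ × R⟦X⟧, GoodPair p →
      MooreAct 0 PowerSeries.X p = p ∧ MooreRel p p) ∧
    (∀ p q : R⟦X⟧ × R⟦X⟧, GoodPair p → GoodPair q → MooreRel p q → MooreRel q p) ∧
    (∀ p q r : R⟦X⟧ × R⟦X⟧, GoodPair p → GoodPair q → GoodPair r →
      MooreRel p q → MooreRel q r → MooreRel p r) := by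
  refine ⟨fun p hp G F hG hF _ => goodPair_mooreAct hp hG hF, fun p hp => ?_, ?_, ?_⟩
  · have hid := mooreAct_zero_X hp.1 hp.2.1
    exact ⟨hid, 0, X, isOdd_zero, isOdd_X, inH_X, hid.symm⟩
  · rintro p q hp - ⟨G, F, hG, hF, hFH, rfl⟩
    obtain ⟨F', hF', hF'H, hFF'⟩ := exists_isOdd_inH_comp_eq_X hF hFH
    refine ⟨-G.comp F', F', (hG.comp hF').neg, hF', hF'H, ?_⟩
    rw [mooreAct_mooreAct hp.1 hp.2.1 hG hF hF'H.1, neg_add_cancel, hFF',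
      mooreAct_zero_X hp.1 hp.2.1]
  · rintro p q r hp - - ⟨G₁, F₁, hG₁, hF₁, hF₁H, rfl⟩ ⟨G₂, F₂, hG₂, hF₂, hF₂H, rfl⟩
    exact ⟨G₂ + G₁.comp F₂, F₁.comp F₂, hG₂.add (hG₁.comp hF₂), hF₁.comp hF₂, hF₁H.comp hF₂H,
      mooreAct_mooreAct hp.1 hp.2.1 hG₁ hF₁ hF₂H.1⟩
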